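/- In a finite singleton congestion game, every sequence of asynchronous strict improvement steps (where at each step one player switches to a resource strictly improving their payoff) is finite and terminates at a pure Nash equilibrium. -/
import Mathlib


open Finset

/-- Number of players choosing resource `j` under profile `σ`. -/
def congCount {M N : ℕ} (σ : Fin M → Fin N) (j : Fin N) : ℕ :=
  (Finset.univ.filter fun i => σ i = j).card

/-- Payoff of player `i` under profile `σ`: `h_{σ i}(K_{σ i}(σ))`. -/
def congPayoff {M N : ℕ} (h : Fin N → ℕ → ℝ) (σ : Fin M → Fin N) (i : Fin M) : ℝ :=
  h (σ i) (congCount σ (σ i))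

/-- `σ'` is obtained from `σ` by a strict improvement step: one player deviates to a
resource strictly improving their payoff. -/
def ImprovementStep {M N : ℕ} (h : Fin N → ℕ → ℝ) (σ σ' : Fin M → Fin N) : Prop :=
  ∃ i : Fin M, ∃ j' : Fin N, σ' = Function.update σ i j' ∧
    congPayoff h σ i < congPayoff h σ' i

/-- A pure Nash equilibrium: no player can strictly improve by a unilateral deviation. -/
def IsPNE {M N : ℕ} (h : Fin N → ℕ → ℝ) (σ : Fin M → Fin N) : Prop :=
  ∀ i : Fin M, ∀ j' : Fin N, congPayoff h (Function.update σ i j') i ≤ congPayoff h σ i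

noncomputable def congPot {M N : ℕ} (h : Fin N → ℕ → ℝ) (σ : Fin M → Fin N) : ℝ :=
  ∑ j : Fin N, ∑ k ∈ Finset.range (congCount σ j), h j (k + 1)

lemma congCount_update_new {M N : ℕ} (σ : Fin M → Fin N) (i : Fin M) (j' : Fin N)
    (hne : j' ≠ σ i) :
    congCount (Function.update σ i j') j' = congCount σ j' + 1 := by
  unfold congCount
  have hset : (Finset.univ.filter fun x => Function.update σ i j' x = j')
      = insert i (Finset.univ.filter fun x => σ x = j') := by
    ext x
    by_cases hx : x = i <;> simp [Function.update, hx]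
  rw [hset, Finset.card_insert_of_notMem (by simp [hne.symm])]

lemma congCount_update_old {M N : ℕ} (σ : Fin M → Fin N) (i : Fin M) (j' : Fin N)
    (hne : j' ≠ σ i) :
    congCount σ (σ i) = congCount (Function.update σ i j') (σ i) + 1 := by
  unfold congCount
  have hset : (Finset.univ.filter fun x => σ x = σ i)
      = insert i (Finset.univ.filter fun x => Function.update σ i j' x = σ i) := by
    ext x
    by_cases hx : x = i <;> simp [Function.update, hx, hne]
  rw [hset, Finset.card_insert_of_notMem (by simp [Function.update, hne])]

lemma congCount_update_other {M N : ℕ} (σ : Fin M → Fin N) (i : Fin M) (j' j : Fin N)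
    (h1 : j ≠ j') (h2 : j ≠ σ i) :
    congCount (Function.update σ i j') j = congCount σ j := by
  unfold congCount
  congr 1
  ext x
  by_cases hx : x = i <;> simp [Function.update, hx, h1.symm, h2.symm]

lemma congPot_lt {M N : ℕ} (h : Fin N → ℕ → ℝ) (σ σ' : Fin M → Fin N)
    (hst : ImprovementStep h σ σ') : congPot h σ < congPot h σ' := by
  obtain ⟨i, j', rfl, hlt⟩ := hst
  have hne : j' ≠ σ i := by
    rintro rfl
    rw [Function.update_eq_self] at hlt
    exact lt_irrefl _ hlt
  set σ' := Function.update σ i j' with hσ'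
  have hσ'i : σ' i = j' := Function.update_self i j' σ
  -- payoff identities
  have hpay' : congPayoff h σ' i = h j' (congCount σ j' + 1) := by
    rw [congPayoff, hσ'i, congCount_update_new σ i j' hne]
  have hpay : congPayoff h σ i = h (σ i) (congCount σ (σ i)) := rfl
  -- potential difference
  have key : congPot h σ' - congPot h σ = congPayoff h σ' i - congPayoff h σ i := by
    have hdiff : congPot h σ' - congPot h σ
        = ∑ j : Fin N, ((∑ k ∈ Finset.range (congCount σ' j), h j (k + 1))
            - ∑ k ∈ Finset.range (congCount σ j), h j (k + 1)) := by
      rw [Finset.sum_sub_distrib]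
      rfl
    rw [hdiff]
    rw [← Finset.sum_subset (Finset.subset_univ ({σ i, j'} : Finset (Fin N)))
      (fun j _ hj => by
        simp only [Finset.mem_insert, Finset.mem_singleton, not_or] at hj
        rw [congCount_update_other σ i j' j hj.2 hj.1]
        ring)]
    rw [Finset.sum_pair (fun hh => hne hh.symm)]
    have e1 : (∑ k ∈ Finset.range (congCount σ' (σ i)), h (σ i) (k + 1))
        - ∑ k ∈ Finset.range (congCount σ (σ i)), h (σ i) (k + 1)
        = -(h (σ i) (congCount σ (σ i))) := by
      rw [congCount_update_old σ i j' hne, Finset.sum_range_succ]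
      rw [← congCount_update_old σ i j' hne]
      ring
    have e2 : (∑ k ∈ Finset.range (congCount σ' j'), h j' (k + 1))
        - ∑ k ∈ Finset.range (congCount σ j'), h j' (k + 1)
        = h j' (congCount σ j' + 1) := by
      rw [congCount_update_new σ i j' hne, Finset.sum_range_succ]
      ring
    rw [e1, e2, hpay', hpay]
    ring
  linarith
/-- In a finite singleton congestion game, every sequence of asynchronous strict
improvement steps is finite (there is no infinite improvement path), and a profile from
which no strict improvement step is possible is a pure Nash equilibrium; hence every
maximal improvement path terminates at a pure Nash equilibrium. -/
theorem improvement_paths_finite_and_terminate_at_PNE {M N : ℕ} (h : Fin N → ℕ → ℝ) :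
    (¬ ∃ f : ℕ → (Fin M → Fin N), ∀ t : ℕ, ImprovementStep h (f t) (f (t + 1))) ∧
    (∀ σ : Fin M → Fin N, (¬ ∃ σ' : Fin M → Fin N, ImprovementStep h σ σ') → IsPNE h σ) := by
  constructor
  · rintro ⟨f, hf⟩
    have hmono : StrictMono (fun t => congPot h (f t)) :=
      strictMono_nat_of_lt_succ fun t => congPot_lt h (f t) (f (t + 1)) (hf t)
    have hinj : Function.Injective f := fun a b hab => hmono.injective (by simp [hab])
    exact not_injective_infinite_finite f hinj
  · intro σ hno i j'
    by_contra hc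
    push_neg at hc
    exact hno ⟨Function.update σ i j', i, j', rfl, hc⟩
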